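/- Let G ∈ C³(ℝⁿ; ℝⁿ), let μ be a finite signed Borel measure on ℝ with μ(ℝ) = 0 and ∫ |y|³ |μ|(dy) < ∞, let ε > 0, and let u : ℝ → ℝⁿ be bounded and continuous. For y ≠ 0 set D̂_{εy}u(x) = (u(x+εy) − u(x))/(εy) and let (D_ε v)(x) = ε^{−1} ∫_ℝ v(x+εy) μ(dy). Then for every x ∈ ℝ the following identity holds: D_ε(G∘u)(x) = ∇G(u(x)) D_ε u(x) + ∫_ℝ (εy²/2) D²G(u(x))[D̂_{εy}u(x), D̂_{εy}u(x)] μ(dy) + ∫_ℝ ε² y³ ∫₀¹ ∫₀ᵗ ∫₀ˢ D³G( (1−r) u(x) + r u(x+εy) ) [D̂_{εy}u(x), D̂_{εy}u(x), D̂_{εy}u(x)] dr ds dt μ(dy), where the integrands are interpreted as 0 at y = 0 and all integrals converge absolutely. -/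

import Mathlib

/-!
Taylor's formula for `G` along the segment from `a = u x` to `b = u (x + ε y)`, with the
remainder written as an iterated integral (three nested applications of the fundamental theorem
of calculus), reads `G b = G a + DG(a)(b - a) + ½ D²G(a)[b - a]² + ∫∫∫ D³G(a + r(b - a))[b - a]³`.
Since `b - a = εy • D̂_{εy} u(x)`, multilinearity turns the last two terms into `ε` times the
quadratic and cubic integrands. Integrating against `μ = μp - μn`, the constant term cancels
because both measures have the same mass, and the linear term gives `DG(u x)(ε D_ε u(x))`.
Every integrand is a continuous function of `u (x + ε y)`, which stays in a compact ball, so it is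
integrable against a finite measure.
-/

open MeasureTheory
open scoped Matrix

/-- Integral of a vector-valued function against the signed measure `μ = μp - μn`. -/
noncomputable def sInt {n : ℕ} (μp μn : Measure ℝ) (F : ℝ → EuclideanSpace ℝ (Fin n)) :
    EuclideanSpace ℝ (Fin n) :=
  (∫ y, F y ∂μp) - ∫ y, F y ∂μn

/-- The approximate derivative `(D_ε v)(x) = ε^{-1} ∫ v(x+εy) μ(dy)`. -/
noncomputable def Deps {n : ℕ} (μp μn : Measure ℝ) (ε : ℝ)
    (v : ℝ → EuclideanSpace ℝ (Fin n)) (x : ℝ) : EuclideanSpace ℝ (Fin n) :=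
  ε⁻¹ • sInt μp μn fun y => v (x + ε * y)

/-- The difference quotient `D̂_ζ u(x) = (u(x+ζ) - u(x))/ζ`. -/
noncomputable def Dhat {n : ℕ} (ζ : ℝ) (u : ℝ → EuclideanSpace ℝ (Fin n)) (x : ℝ) :
    EuclideanSpace ℝ (Fin n) :=
  ζ⁻¹ • (u (x + ζ) - u x)

/-- The quadratic Taylor term
`y ↦ (εy²/2) D²G(u(x))[D̂_{εy}u(x), D̂_{εy}u(x)]`. -/
noncomputable def quadTerm {n : ℕ} (G : EuclideanSpace ℝ (Fin n) → EuclideanSpace ℝ (Fin n))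
    (ε : ℝ) (u : ℝ → EuclideanSpace ℝ (Fin n)) (x y : ℝ) : EuclideanSpace ℝ (Fin n) :=
  (ε * y ^ 2 / 2) •
    iteratedFDeriv ℝ 2 G (u x) ![Dhat (ε * y) u x, Dhat (ε * y) u x]

/-- The cubic Taylor remainder term
`y ↦ ε²y³ ∫₀¹∫₀ᵗ∫₀ˢ D³G((1-r)u(x) + r u(x+εy))[D̂_{εy}u(x)]³ dr ds dt`. -/
noncomputable def cubTerm {n : ℕ} (G : EuclideanSpace ℝ (Fin n) → EuclideanSpace ℝ (Fin n))
    (ε : ℝ) (u : ℝ → EuclideanSpace ℝ (Fin n)) (x y : ℝ) : EuclideanSpace ℝ (Fin n) :=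
  (ε ^ 2 * y ^ 3) •
    ∫ t in (0 : ℝ)..1, ∫ s in (0 : ℝ)..t, ∫ r in (0 : ℝ)..s,
      iteratedFDeriv ℝ 3 G ((1 - r) • u x + r • u (x + ε * y))
        ![Dhat (ε * y) u x, Dhat (ε * y) u x, Dhat (ε * y) u x]

section Taylor

open intervalIntegral

variable {E F : Type*} [NormedAddCommGroup E] [NormedSpace ℝ E]
  [NormedAddCommGroup F] [NormedSpace ℝ F]

theorem ContinuousMultilinearMap.map_fun_const_smul {k : ℕ}
    (f : ContinuousMultilinearMap ℝ (fun _ : Fin k => E) F) (c : ℝ) (v : E) :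
    f (fun _ => c • v) = c ^ k • f (fun _ => v) := by
  simpa using f.map_smul_univ (fun _ => c) (fun _ => v)

theorem hasDerivAt_iteratedFDeriv_apply_add_smul {G : E → F} {N : ℕ} (hG : ContDiff ℝ N G)
    {k : ℕ} (hk : k < N) (a h : E) (t : ℝ) :
    HasDerivAt (fun s : ℝ => iteratedFDeriv ℝ k G (a + s • h) (fun _ => h))
      (iteratedFDeriv ℝ (k + 1) G (a + t • h) (fun _ => h)) t := by
  have hGk : ContDiffAt ℝ (k + 1) G (a + t • h) := (hG.of_le (by exact_mod_cast hk)).contDiffAt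
  have hD : DifferentiableAt ℝ (iteratedFDeriv ℝ k G) (a + t • h) :=
    hG.differentiable_iteratedFDeriv (by exact_mod_cast hk) _
  rw [← hGk.deriv_fderiv_add_smul]
  exact ((hD.continuousMultilinear_apply_const _).comp (f := fun s : ℝ => a + s • h) t
    (by fun_prop)).hasDerivAt

variable [CompleteSpace F]

theorem eq_add_integral_of_hasDerivAt {f f' : ℝ → F}
    (hf : ∀ t, HasDerivAt f (f' t) t) (hf' : Continuous f') (t : ℝ) :
    f t = f 0 + ∫ s in (0 : ℝ)..t, f' s := by
  rw [integral_eq_sub_of_hasDerivAt (fun s _ => hf s) (hf'.intervalIntegrable _ _),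
    add_sub_cancel]

theorem taylor_three_iteratedIntegral {f f' f'' f''' : ℝ → F}
    (hf : ∀ t, HasDerivAt f (f' t) t) (hf' : ∀ t, HasDerivAt f' (f'' t) t)
    (hf'' : ∀ t, HasDerivAt f'' (f''' t) t) (hf''' : Continuous f''') :
    f 1 = f 0 + f' 0 + (2 : ℝ)⁻¹ • f'' 0 +
      ∫ t in (0 : ℝ)..1, ∫ s in (0 : ℝ)..t, ∫ r in (0 : ℝ)..s, f''' r := by
  have hf'c : Continuous f' := continuous_iff_continuousAt.2 fun t => (hf' t).continuousAt
  have hf''c : Continuous f'' := continuous_iff_continuousAt.2 fun t => (hf'' t).continuousAt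
  have hI₃ : Continuous fun s => ∫ r in (0 : ℝ)..s, f''' r :=
    continuous_primitive (fun _ _ => hf'''.intervalIntegrable _ _) 0
  have hI₂ : Continuous fun t => ∫ s in (0 : ℝ)..t, ∫ r in (0 : ℝ)..s, f''' r :=
    continuous_primitive (fun _ _ => hI₃.intervalIntegrable _ _) 0
  have hlin : Continuous fun t : ℝ => t • f'' 0 := by fun_prop
  have haff : Continuous fun t : ℝ => f' 0 + t • f'' 0 := by fun_prop
  have h₂ := eq_add_integral_of_hasDerivAt hf'' hf'''
  have h₁ (t : ℝ) :
      f' t = f' 0 + t • f'' 0 + ∫ s in (0 : ℝ)..t, ∫ r in (0 : ℝ)..s, f''' r := by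
    rw [eq_add_integral_of_hasDerivAt hf' hf''c t, integral_congr fun s _ => h₂ s,
      integral_add intervalIntegrable_const (hI₃.intervalIntegrable _ _),
      intervalIntegral.integral_const, sub_zero, add_assoc]
  rw [eq_add_integral_of_hasDerivAt hf hf'c 1, integral_congr fun t _ => h₁ t,
    integral_add (haff.intervalIntegrable _ _) (hI₂.intervalIntegrable _ _),
    integral_add intervalIntegrable_const (hlin.intervalIntegrable _ _),
    intervalIntegral.integral_const, intervalIntegral.integral_smul_const, integral_id]
  norm_num [add_assoc]

theorem map_add_eq_taylor_three_iteratedIntegral {G : E → F} (hG : ContDiff ℝ 3 G) (a h : E) :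
    G (a + h) = G a + fderiv ℝ G a h + (2 : ℝ)⁻¹ • iteratedFDeriv ℝ 2 G a (fun _ => h) +
      ∫ t in (0 : ℝ)..1, ∫ s in (0 : ℝ)..t, ∫ r in (0 : ℝ)..s,
        iteratedFDeriv ℝ 3 G (a + r • h) (fun _ => h) := by
  have hD (k : ℕ) (hk : k < 3) := hasDerivAt_iteratedFDeriv_apply_add_smul hG hk a h
  have hD₃ : Continuous fun r : ℝ => iteratedFDeriv ℝ 3 G (a + r • h) (fun _ => h) :=
    (ContinuousMultilinearMap.apply ℝ (fun _ : Fin 3 => E) F fun _ => h).continuous.comp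
      ((hG.continuous_iteratedFDeriv le_rfl).comp (f := fun r : ℝ => a + r • h) (by fun_prop))
  simpa [iteratedFDeriv_one_apply] using
    taylor_three_iteratedIntegral (hD 0 (by norm_num)) (hD 1 (by norm_num)) (hD 2 (by norm_num)) hD₃

end Taylor

theorem Continuous.integrable_comp_of_bounded {E F α : Type*} [NormedAddCommGroup E]
    [ProperSpace E] [NormedAddCommGroup F] [MeasurableSpace α] {ν : Measure α}
    [IsFiniteMeasure ν] {φ : E → F} (hφ : Continuous φ) {g : α → E}
    (hg : AEStronglyMeasurable g ν) {M : ℝ} (hM : ∀ y, ‖g y‖ ≤ M) :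
    Integrable (fun y => φ (g y)) ν := by
  obtain ⟨C, hC⟩ := (isCompact_closedBall (0 : E) M).exists_bound_of_continuousOn hφ.continuousOn
  exact .of_bound (hφ.comp_aestronglyMeasurable hg) C
    (.of_forall fun y => hC _ (mem_closedBall_zero_iff.2 (hM y)))

section

variable {n : ℕ} {G : EuclideanSpace ℝ (Fin n) → EuclideanSpace ℝ (Fin n)}
  {u : ℝ → EuclideanSpace ℝ (Fin n)} {ε x : ℝ}

theorem smul_Dhat (ζ : ℝ) (u : ℝ → EuclideanSpace ℝ (Fin n)) (x : ℝ) :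
    ζ • Dhat ζ u x = u (x + ζ) - u x := by
  rcases eq_or_ne ζ 0 with rfl | hζ
  · simp
  · rw [Dhat, smul_inv_smul₀ hζ]

theorem smul_quadTerm (y : ℝ) :
    ε • quadTerm G ε u x y =
      (2 : ℝ)⁻¹ • iteratedFDeriv ℝ 2 G (u x) (fun _ => u (x + ε * y) - u x) := by
  rw [quadTerm, ← smul_Dhat, ContinuousMultilinearMap.map_fun_const_smul, smul_smul, smul_smul,
    Matrix.vec_single_eq_const, Matrix.vecCons_const]
  ring_nf

theorem smul_cubTerm (y : ℝ) :
    ε • cubTerm G ε u x y =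
      ∫ t in (0 : ℝ)..1, ∫ s in (0 : ℝ)..t, ∫ r in (0 : ℝ)..s,
        iteratedFDeriv ℝ 3 G ((1 - r) • u x + r • u (x + ε * y))
          (fun _ => u (x + ε * y) - u x) := by
  rw [cubTerm, smul_smul, show ε * (ε ^ 2 * y ^ 3) = (ε * y) ^ 3 by ring, ← smul_Dhat]
  simp only [← intervalIntegral.integral_smul, ← ContinuousMultilinearMap.map_fun_const_smul,
    Matrix.vec_single_eq_const, Matrix.vecCons_const]

theorem taylor_comp_shift (hG : ContDiff ℝ 3 G) (y : ℝ) :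
    G (u (x + ε * y)) = G (u x) + fderiv ℝ G (u x) (u (x + ε * y) - u x) +
      ε • quadTerm G ε u x y + ε • cubTerm G ε u x y := by
  have hseg (r : ℝ) : u x + r • (u (x + ε * y) - u x) = (1 - r) • u x + r • u (x + ε * y) := by
    module
  rw [smul_quadTerm, smul_cubTerm]
  simpa only [add_sub_cancel, hseg] using
    map_add_eq_taylor_three_iteratedIntegral hG (u x) (u (x + ε * y) - u x)

theorem integrable_comp_shift {F : Type*} [NormedAddCommGroup F] (hu : Continuous u)
    (hb : ∃ M, ∀ z, ‖u z‖ ≤ M) {φ : EuclideanSpace ℝ (Fin n) → F} (hφ : Continuous φ)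
    (ν : Measure ℝ) [IsFiniteMeasure ν] :
    Integrable (fun y => φ (u (x + ε * y))) ν :=
  let ⟨_, hM⟩ := hb
  hφ.integrable_comp_of_bounded
    (by fun_prop : Continuous fun y => u (x + ε * y)).aestronglyMeasurable fun _ => hM _

theorem integrable_quadTerm (hε : ε ≠ 0) (hu : Continuous u) (hb : ∃ M, ∀ z, ‖u z‖ ≤ M)
    (ν : Measure ℝ) [IsFiniteMeasure ν] :
    Integrable (quadTerm G ε u x) ν := by
  have h : Integrable (fun y => ε • quadTerm G ε u x y) ν := by
    simp_rw [smul_quadTerm]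
    exact integrable_comp_shift hu hb
      (φ := fun b => (2 : ℝ)⁻¹ • iteratedFDeriv ℝ 2 G (u x) fun _ => b - u x) (by fun_prop) ν
  exact (integrable_smul_iff hε _).1 h

theorem integrable_cubTerm (hG : ContDiff ℝ 3 G) (hε : ε ≠ 0) (hu : Continuous u)
    (hb : ∃ M, ∀ z, ‖u z‖ ≤ M) (ν : Measure ℝ) [IsFiniteMeasure ν] :
    Integrable (cubTerm G ε u x) ν := by
  have h : Integrable (fun y => ε • cubTerm G ε u x y) ν := by
    have hrem (y : ℝ) : ε • cubTerm G ε u x y = G (u (x + ε * y)) - G (u x) -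
        fderiv ℝ G (u x) (u (x + ε * y) - u x) - ε • quadTerm G ε u x y := by
      rw [taylor_comp_shift hG y]; abel
    simp_rw [hrem]
    exact (((integrable_comp_shift hu hb hG.continuous ν).sub (integrable_const _)).sub
      (integrable_comp_shift hu hb (φ := fun b => fderiv ℝ G (u x) (b - u x)) (by fun_prop) ν)).sub
      ((integrable_quadTerm hε hu hb ν).smul ε)
  exact (integrable_smul_iff hε _).1 h

theorem integral_comp_shift_eq (hG : ContDiff ℝ 3 G) (hε : ε ≠ 0) (hu : Continuous u)
    (hb : ∃ M, ∀ z, ‖u z‖ ≤ M) (ν : Measure ℝ) [IsFiniteMeasure ν] :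
    ∫ y, G (u (x + ε * y)) ∂ν =
      ν.real Set.univ • (G (u x) - fderiv ℝ G (u x) (u x)) +
        fderiv ℝ G (u x) (∫ y, u (x + ε * y) ∂ν) +
        ε • ∫ y, quadTerm G ε u x y ∂ν + ε • ∫ y, cubTerm G ε u x y ∂ν := by
  set L := fderiv ℝ G (u x)
  have hpt (y : ℝ) : G (u (x + ε * y)) = (G (u x) - L (u x)) + L (u (x + ε * y)) +
      ε • quadTerm G ε u x y + ε • cubTerm G ε u x y := by
    rw [taylor_comp_shift hG y, map_sub]; abel
  have hg := integrable_comp_shift hu hb (x := x) (ε := ε) L.continuous ν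
  have hu' := integrable_comp_shift hu hb (x := x) (ε := ε) (φ := fun b => b) continuous_id ν
  have hq : Integrable (fun y => ε • quadTerm G ε u x y) ν :=
    (integrable_quadTerm hε hu hb ν).smul ε
  have hc : Integrable (fun y => ε • cubTerm G ε u x y) ν :=
    (integrable_cubTerm hG hε hu hb ν).smul ε
  simp_rw [hpt]
  rw [integral_add ?_ hc, integral_add ?_ hq, integral_add (integrable_const _) hg,
    integral_const, L.integral_comp_comm hu',
    integral_smul, integral_smul]
  · exact (integrable_const _).add hg
  · exact ((integrable_const _).add hg).add hq

end

theorem stmt_18_general (n : ℕ) (G : EuclideanSpace ℝ (Fin n) → EuclideanSpace ℝ (Fin n))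
    (hG : ContDiff ℝ 3 G)
    (μp μn : Measure ℝ) [IsFiniteMeasure μp] [IsFiniteMeasure μn]
    (hzero : μp Set.univ = μn Set.univ)
    (ε : ℝ) (hε : 0 < ε)
    (u : ℝ → EuclideanSpace ℝ (Fin n)) (hu : Continuous u)
    (hb : ∃ M, ∀ x, ‖u x‖ ≤ M) (x : ℝ) :
    (Integrable (quadTerm G ε u x) μp ∧ Integrable (quadTerm G ε u x) μn ∧
      Integrable (cubTerm G ε u x) μp ∧ Integrable (cubTerm G ε u x) μn) ∧
    Deps μp μn ε (fun z => G (u z)) x =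
      fderiv ℝ G (u x) (Deps μp μn ε u x) +
        sInt μp μn (quadTerm G ε u x) + sInt μp μn (cubTerm G ε u x) := by
  refine ⟨⟨integrable_quadTerm hε.ne' hu hb μp, integrable_quadTerm hε.ne' hu hb μn,
    integrable_cubTerm hG hε.ne' hu hb μp, integrable_cubTerm hG hε.ne' hu hb μn⟩, ?_⟩
  have hmass : μp.real Set.univ = μn.real Set.univ := by simp [measureReal_def, hzero]
  simp only [Deps, sInt, integral_comp_shift_eq hG hε.ne' hu hb, hmass, map_smul, map_sub]
  match_scalars <;> simp [hε.ne']

/-- Exact Taylor expansion of `D_ε(G∘u)`, replacing the chain rule for the approximate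
derivative `D_ε`: all integrals converge absolutely and
`D_ε(G∘u)(x) = ∇G(u(x)) D_ε u(x) + ∫ quad μ(dy) + ∫ cubic μ(dy)`. -/
theorem stmt_18 (n : ℕ) (G : EuclideanSpace ℝ (Fin n) → EuclideanSpace ℝ (Fin n))
    (hG : ContDiff ℝ 3 G)
    (μp μn : Measure ℝ) [IsFiniteMeasure μp] [IsFiniteMeasure μn]
    (hzero : μp Set.univ = μn Set.univ)
    (hmom : Integrable (fun y : ℝ => |y| ^ 3) (μp + μn))
    (ε : ℝ) (hε : 0 < ε)
    (u : ℝ → EuclideanSpace ℝ (Fin n)) (hu : Continuous u)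
    (hb : ∃ M, ∀ x, ‖u x‖ ≤ M) (x : ℝ) :
    (Integrable (quadTerm G ε u x) μp ∧ Integrable (quadTerm G ε u x) μn ∧
      Integrable (cubTerm G ε u x) μp ∧ Integrable (cubTerm G ε u x) μn) ∧
    Deps μp μn ε (fun z => G (u z)) x =
      fderiv ℝ G (u x) (Deps μp μn ε u x) +
        sInt μp μn (quadTerm G ε u x) + sInt μp μn (cubTerm G ε u x) :=
  stmt_18_general n G hG μp μn hzero ε hε u hu hb x
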